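/- arXiv:2603.08213 — 2 statements merged into one kernel-verified Lean document; each statement's English description precedes it below -/
import Mathlib

section
/- For k = 4, the minimum distance of the code L_4^+ is 5: every nonzero codeword c ·ᵥ G_{L_4^+} with c ∈ 𝔽₂^4, c ≠ 0, has Hamming weight at least 5, and some nonzero codeword has Hamming weight exactly 5. -/
open Matrix

/-- The k×k matrix over 𝔽₂ with 0 on the diagonal and 1 off the diagonal. -/
def Gmat (k : ℕ) : Matrix (Fin k) (Fin k) (ZMod 2) :=
  fun i j => if i = j then 0 else 1

/-- Generator matrix of the code `L_k^+`: the block matrix `[I_k | G_k | I_k]`. -/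
def GLkp (k : ℕ) : Matrix (Fin k) (Fin k ⊕ Fin k ⊕ Fin k) (ZMod 2) :=
  Matrix.fromCols 1 (Matrix.fromCols (Gmat k) 1)

/-- Hamming weight: the number of nonzero coordinates of a vector. -/
def wt {n : Type*} [Fintype n] (v : n → ZMod 2) : ℕ :=
  (Finset.univ.filter fun j => v j ≠ 0).card

/-
For `c` of weight `w`, the codeword `c ᵥ* [I | G | I]` has weight `2w + wt (c ᵥ* G)`, and
`(c ᵥ* G) j = (∑ i, c i) - c j = w - c j` in `𝔽₂`: so `c ᵥ* G` is `c` when `w` is even and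
its complement when `w` is odd. The codeword therefore has weight `3w` for even `w` and `k + w`
for odd `w`, so every nonzero codeword has weight at least `min (k + 1) 6`, and unit vectors
reach `k + 1`.
-/

section Weight

variable {n : Type*} [Fintype n]

theorem wt_eq_zero_iff {v : n → ZMod 2} : wt v = 0 ↔ v = 0 := by
  simp [wt, Finset.filter_eq_empty_iff, funext_iff]

theorem wt_le_card (v : n → ZMod 2) : wt v ≤ Fintype.card n :=
  Finset.card_filter_le _ _

theorem wt_sumElim {m : Type*} [Fintype m] (u : n → ZMod 2) (v : m → ZMod 2) :
    wt (Sum.elim u v) = wt u + wt v := by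
  simp only [wt, Finset.card_filter, Fintype.sum_sum_type, Sum.elim_inl, Sum.elim_inr]
  rfl

theorem wt_neg (v : n → ZMod 2) : wt (-v) = wt v := by
  simp [wt]

theorem wt_one_sub (v : n → ZMod 2) : wt (1 - v) = Fintype.card n - wt v := by
  have hcompl : ∀ x : ZMod 2, 1 - x ≠ 0 ↔ ¬ x ≠ 0 := by decide
  simp only [wt, Pi.sub_apply, Pi.one_apply, hcompl]
  rw [← Finset.card_univ, ← Finset.card_filter_add_card_filter_not (s := Finset.univ)
    (fun j => v j ≠ 0), Nat.add_sub_cancel_left]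

theorem sum_eq_wt_cast (v : n → ZMod 2) : ∑ j, v j = (wt v : ZMod 2) := by
  rw [wt, Finset.card_filter, Nat.cast_sum]
  exact Finset.sum_congr rfl fun j _ => by generalize v j = x; revert x; decide

end Weight

theorem Gmat_eq (k : ℕ) : Gmat k = Matrix.of (fun _ _ => 1) - 1 := by
  ext i j
  simp only [Gmat, Matrix.sub_apply, Matrix.of_apply, Matrix.one_apply]
  split_ifs <;> simp

theorem vecMul_Gmat {k : ℕ} (c : Fin k → ZMod 2) :
    c ᵥ* Gmat k = Function.const _ (wt c : ZMod 2) - c := by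
  have hsum : c ᵥ* (Matrix.of fun _ _ => 1 : Matrix (Fin k) (Fin k) (ZMod 2)) =
      Function.const _ (wt c : ZMod 2) := by
    ext j
    simp [vecMul, dotProduct, sum_eq_wt_cast]
  rw [Gmat_eq, vecMul_sub, vecMul_one, hsum]

theorem wt_vecMul_Gmat {k : ℕ} (c : Fin k → ZMod 2) :
    wt (c ᵥ* Gmat k) = if Even (wt c) then wt c else k - wt c := by
  rw [vecMul_Gmat]
  split_ifs with h
  · rw [(ZMod.natCast_eq_zero_iff_even).2 h, Function.const_zero, zero_sub, wt_neg]
  · rw [(ZMod.natCast_eq_one_iff_odd).2 (Nat.not_even_iff_odd.1 h), Function.const_one,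
      wt_one_sub, Fintype.card_fin]

theorem wt_vecMul_GLkp {k : ℕ} (c : Fin k → ZMod 2) :
    wt (c ᵥ* GLkp k) = 2 * wt c + wt (c ᵥ* Gmat k) := by
  rw [GLkp, vecMul_fromCols, vecMul_fromCols, vecMul_one, wt_sumElim, wt_sumElim]
  ring

theorem min_le_wt_vecMul_GLkp {k : ℕ} {c : Fin k → ZMod 2} (hc : c ≠ 0) :
    min (k + 1) 6 ≤ wt (c ᵥ* GLkp k) := by
  have hpos : wt c ≠ 0 := mt wt_eq_zero_iff.1 hc
  have hle : wt c ≤ k := by simpa using wt_le_card c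
  rw [wt_vecMul_GLkp, wt_vecMul_Gmat]
  split_ifs with h
  · obtain ⟨r, hr⟩ := h
    omega
  · omega

theorem wt_vecMul_GLkp_single {k : ℕ} (i : Fin k) :
    wt (Pi.single i 1 ᵥ* GLkp k) = k + 1 := by
  have hsingle : wt (Pi.single i (1 : ZMod 2)) = 1 := by
    rw [wt, Finset.card_eq_one]
    exact ⟨i, by ext j; by_cases j = i <;> simp_all⟩
  have hk : 1 ≤ k := Fin.pos i
  rw [wt_vecMul_GLkp, wt_vecMul_Gmat, hsingle, if_neg Nat.not_even_one]
  omega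

/-- The minimum distance of `L_4^+` is 5. -/
theorem minDistance_L4p_eq_five :
    (∀ c : Fin 4 → ZMod 2, c ≠ 0 → 5 ≤ wt (Matrix.vecMul c (GLkp 4))) ∧
    (∃ c : Fin 4 → ZMod 2, c ≠ 0 ∧ wt (Matrix.vecMul c (GLkp 4)) = 5) :=
  ⟨fun _ hc => min_le_wt_vecMul_GLkp hc,
    ⟨Pi.single 0 1, by simp, wt_vecMul_GLkp_single 0⟩⟩
end

section
/- Logical dimension of QL_k: for every natural number k ≥ 1, with H_X = H_{L_k} ⊗ I_{3k} and H_Z = G_{L_k} ⊗ H_{L_k^+} over 𝔽₂, the 𝔽₂-span of the rows of H_Z is contained in the null space K = {v ∈ 𝔽₂^{6k²} : H_X · v = 0}, and the dimension of K minus the dimension of the row space of H_Z equals k² (so the CSS code QL_k encodes k² logical qubits in 6k² physical qubits). -/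
/-!
Both stabilizer matrices have a right inverse (a Kronecker product of block right inverses of
the factors), so they have full row rank `3k²` and `2k²`. Their orthogonality comes from
`H_{L_k} G_{L_k}ᵀ = G_k + G_kᵀ = 0`, since `G_k` is symmetric and we are in characteristic 2.
Rank–nullity then gives `dim K - rank H_Z = (6k² - 3k²) - 2k² = k²`.
-/

open Matrix Kronecker

/-- Generator matrix of the code `L_k`: the block matrix `[I_k | G_k]`. -/
def GLk (k : ℕ) : Matrix (Fin k) (Fin k ⊕ Fin k) (ZMod 2) :=
  Matrix.fromCols 1 (Gmat k)

/-- Parity-check matrix of the code `L_k`: the block matrix `[G_k | I_k]`. -/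
def HLk (k : ℕ) : Matrix (Fin k) (Fin k ⊕ Fin k) (ZMod 2) :=
  Matrix.fromCols (Gmat k) 1

/-- Parity-check matrix of the code `L_k^+`:
the block matrix `[[G_k, I_k, 0_k], [I_k, 0_k, I_k]]`. -/
def HLkp (k : ℕ) : Matrix (Fin k ⊕ Fin k) (Fin k ⊕ Fin k ⊕ Fin k) (ZMod 2) :=
  Matrix.fromRows
    (Matrix.fromCols (Gmat k) (Matrix.fromCols 1 0))
    (Matrix.fromCols 1 (Matrix.fromCols 0 1))

/-- The X-type stabilizer matrix of the quantum code `QL_k`: `H_X = H_{L_k} ⊗ I_{3k}`,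
a `3k² × 6k²` matrix over 𝔽₂ (the `3k`-element index set is `Fin k ⊕ Fin k ⊕ Fin k`). -/
def HXq (k : ℕ) :
    Matrix (Fin k × (Fin k ⊕ Fin k ⊕ Fin k))
      ((Fin k ⊕ Fin k) × (Fin k ⊕ Fin k ⊕ Fin k)) (ZMod 2) :=
  HLk k ⊗ₖ (1 : Matrix (Fin k ⊕ Fin k ⊕ Fin k) (Fin k ⊕ Fin k ⊕ Fin k) (ZMod 2))

/-- The Z-type stabilizer matrix of the quantum code `QL_k`: `H_Z = G_{L_k} ⊗ H_{L_k^+}`,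
a `2k² × 6k²` matrix over 𝔽₂. -/
def HZq (k : ℕ) :
    Matrix (Fin k × (Fin k ⊕ Fin k))
      ((Fin k ⊕ Fin k) × (Fin k ⊕ Fin k ⊕ Fin k)) (ZMod 2) :=
  GLk k ⊗ₖ HLkp k

namespace Matrix

section CSS

variable {K : Type*} [Field K] {m n p : Type*}

theorem rank_eq_card_of_mul_eq_one [Fintype m] [Fintype n] [DecidableEq m] {A : Matrix m n K}
    {B : Matrix n m K} (h : A * B = 1) : A.rank = Fintype.card m :=
  le_antisymm A.rank_le_card_height <| by
    simpa only [h, rank_one] using A.rank_mul_le_left B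

theorem finrank_ker_mulVecLin [Fintype n] (A : Matrix m n K) :
    Module.finrank K (LinearMap.ker A.mulVecLin) = Fintype.card n - A.rank := by
  have := LinearMap.finrank_range_add_finrank_ker A.mulVecLin
  rw [Module.finrank_fintype_fun_eq_card] at this
  unfold rank
  omega

theorem span_range_le_ker_mulVecLin_of_mul_transpose_eq_zero [Fintype n] {A : Matrix m n K}
    {B : Matrix p n K} (h : A * Bᵀ = 0) :
    Submodule.span K (Set.range B) ≤ LinearMap.ker A.mulVecLin := by
  rw [Submodule.span_le]
  rintro _ ⟨i, rfl⟩
  ext j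
  simpa [mul_apply, mulVec, dotProduct] using congrFun (congrFun h j) i

end CSS

section Blocks

variable {R : Type*} [Semiring R] {m n₁ n₂ : Type*} [Fintype n₁] [Fintype n₂]

theorem fromCols_mul_fromRows_one_zero [DecidableEq n₁] (A₁ : Matrix m n₁ R)
    (A₂ : Matrix m n₂ R) :
    fromCols A₁ A₂ * fromRows (1 : Matrix n₁ n₁ R) (0 : Matrix n₂ n₁ R) = A₁ := by
  rw [fromCols_mul_fromRows, Matrix.mul_one, Matrix.mul_zero, add_zero]

theorem fromCols_mul_fromRows_zero_one [DecidableEq n₂] (A₁ : Matrix m n₁ R)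
    (A₂ : Matrix m n₂ R) :
    fromCols A₁ A₂ * fromRows (0 : Matrix n₁ n₂ R) (1 : Matrix n₂ n₂ R) = A₂ := by
  rw [fromCols_mul_fromRows, Matrix.mul_one, Matrix.mul_zero, zero_add]

end Blocks

theorem kronecker_mul_kronecker_eq_one {R : Type*} [CommSemiring R] {m n p q : Type*}
    [Fintype n] [Fintype q] [DecidableEq m] [DecidableEq p]
    {A : Matrix m n R} {B : Matrix n m R} {C : Matrix p q R} {D : Matrix q p R}
    (hAB : A * B = 1) (hCD : C * D = 1) : (A ⊗ₖ C) * (B ⊗ₖ D) = 1 := by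
  rw [← mul_kronecker_mul, hAB, hCD, one_kronecker_one]

theorem fromCols_mul_transpose_fromCols_eq_zero {R : Type*} [CommRing R] [CharP R 2]
    {n : Type*} [Fintype n] [DecidableEq n] {A : Matrix n n R} (hA : A.IsSymm) :
    fromCols A (1 : Matrix n n R) * (fromCols (1 : Matrix n n R) A)ᵀ = 0 := by
  rw [transpose_fromCols, fromCols_mul_fromRows, transpose_one, Matrix.mul_one, Matrix.one_mul,
    hA.eq]
  ext i j
  exact CharTwo.add_self_eq_zero (A i j)

end Matrix

theorem Gmat_isSymm (k : ℕ) : (Gmat k).IsSymm := by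
  ext i j
  simp [Gmat, eq_comm]

theorem HXq_mul_transpose_HZq (k : ℕ) : HXq k * (HZq k)ᵀ = 0 := by
  rw [HXq, HZq, ← kroneckerMap_transpose, ← mul_kronecker_mul, HLk, GLk,
    fromCols_mul_transpose_fromCols_eq_zero (Gmat_isSymm k), zero_kronecker]

theorem HLkp_mul_fromRows_zero_one (k : ℕ) :
    HLkp k * fromRows (0 : Matrix (Fin k) (Fin k ⊕ Fin k) (ZMod 2))
      (1 : Matrix (Fin k ⊕ Fin k) (Fin k ⊕ Fin k) (ZMod 2)) = 1 := by
  rw [HLkp, fromRows_mul, fromCols_mul_fromRows_zero_one, fromCols_mul_fromRows_zero_one,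
    fromRows_fromCols_eq_fromBlocks, fromBlocks_one]

theorem rank_HXq (k : ℕ) : (HXq k).rank = 3 * k ^ 2 := by
  have hinv := kronecker_mul_kronecker_eq_one
    (fromCols_mul_fromRows_zero_one (Gmat k) (1 : Matrix (Fin k) (Fin k) (ZMod 2)))
    (Matrix.mul_one (1 : Matrix (Fin k ⊕ Fin k ⊕ Fin k) (Fin k ⊕ Fin k ⊕ Fin k) (ZMod 2)))
  rw [HXq, HLk, rank_eq_card_of_mul_eq_one hinv]
  simp only [Fintype.card_prod, Fintype.card_sum, Fintype.card_fin]
  ring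

theorem rank_HZq (k : ℕ) : (HZq k).rank = 2 * k ^ 2 := by
  have hinv := kronecker_mul_kronecker_eq_one
    (fromCols_mul_fromRows_one_zero (1 : Matrix (Fin k) (Fin k) (ZMod 2)) (Gmat k))
    (HLkp_mul_fromRows_zero_one k)
  rw [HZq, GLk, rank_eq_card_of_mul_eq_one hinv]
  simp only [Fintype.card_prod, Fintype.card_sum, Fintype.card_fin]
  ring

theorem logicalDimension_QLk_general (k : ℕ) :
    Submodule.span (ZMod 2) (Set.range (HZq k)) ≤
      LinearMap.ker (Matrix.mulVecLin (HXq k)) ∧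
    Module.finrank (ZMod 2) ↥(LinearMap.ker (Matrix.mulVecLin (HXq k))) -
      Module.finrank (ZMod 2) ↥(Submodule.span (ZMod 2) (Set.range (HZq k))) = k ^ 2 := by
  refine ⟨span_range_le_ker_mulVecLin_of_mul_transpose_eq_zero (HXq_mul_transpose_HZq k), ?_⟩
  have hcard : Fintype.card ((Fin k ⊕ Fin k) × (Fin k ⊕ Fin k ⊕ Fin k)) = 6 * k ^ 2 := by
    simp only [Fintype.card_prod, Fintype.card_sum, Fintype.card_fin]
    ring
  have hspan : Module.finrank (ZMod 2) (Submodule.span (ZMod 2) (Set.range (HZq k))) =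
      (HZq k).rank :=
    (rank_eq_finrank_span_row (HZq k)).symm
  rw [finrank_ker_mulVecLin, hspan, rank_HXq, rank_HZq, hcard]
  omega

/-- Logical dimension of `QL_k`: for `k ≥ 1`, the row space of `H_Z` is contained in the
null space `K` of `H_X`, and `dim K - dim (row space of H_Z) = k²`. -/
theorem logicalDimension_QLk (k : ℕ) (hk : 1 ≤ k) :
    Submodule.span (ZMod 2) (Set.range (HZq k)) ≤
      LinearMap.ker (Matrix.mulVecLin (HXq k)) ∧
    Module.finrank (ZMod 2) ↥(LinearMap.ker (Matrix.mulVecLin (HXq k))) -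
      Module.finrank (ZMod 2) ↥(Submodule.span (ZMod 2) (Set.range (HZq k))) = k ^ 2 :=
  logicalDimension_QLk_general k
end
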